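/- arXiv:1501.05197 — 2 statements merged into one kernel-verified Lean document; each statement's English description precedes it below -/
import Mathlib

section
/- Let T be a tree that has at least one regular core. Then T has at least one main core. -/
/-!
Fix a regular core `v₀` and let `v` be a regular core farthest from it. If `v` were minor, at
least two neighbours of `v` would have subtrees that are not g-legs. Such a subtree always holds a
regular core: a subtree containing cores, all of them small, with a core on the other side, is a
modified leg (induction on the subtree, descending through non-core vertices, which have degree
at most 2). One of the two subtrees misses `v₀`, and its regular core is farther from `v₀` than
`v`.
-/

open SimpleGraph

variable {V : Type*} [Fintype V] [DecidableEq V]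

/-- A vertex `τ` separates `u` and `w` if its distances to them differ. -/
def Separates (T : SimpleGraph V) (τ u w : V) : Prop :=
  T.dist τ u ≠ T.dist τ w

/-- There are at least two vertices of `L` separating `u` and `w`. -/
def HasTwoSeparators (T : SimpleGraph V) (L : Set V) (u w : V) : Prop :=
  ∃ τ₁ ∈ L, ∃ τ₂ ∈ L, τ₁ ≠ τ₂ ∧ Separates T τ₁ u w ∧ Separates T τ₂ u w

/-- `L` is a landmark set (non-landmarks model, `k = 2`): every pair of distinct
vertices outside `L` is separated by at least two vertices of `L`. -/
def IsLandmarkSet (T : SimpleGraph V) (L : Set V) : Prop :=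
  ∀ u w : V, u ≠ w → u ∉ L → w ∉ L → HasTwoSeparators T L u w

/-- A core is a vertex of degree at least 3. -/
def IsCore (T : SimpleGraph V) [DecidableRel T.Adj] (v : V) : Prop :=
  3 ≤ T.degree v

/-- The subtree of the neighbor `x` of `v`: in a tree, the connected component of `x`
obtained by removing `v`, characterized via distances (`w` is in it iff the path from
`v` to `w` passes through `x`). -/
def Branch (T : SimpleGraph V) (v x : V) : Set V :=
  {w | T.dist v w = T.dist x w + 1}

/-- The subtree of the neighbor `x` of `v` is a (standard) leg:
a path containing no cores. -/
def IsStandardLeg (T : SimpleGraph V) [DecidableRel T.Adj] (v x : V) : Prop :=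
  T.Adj v x ∧ ∀ w ∈ Branch T v x, T.degree w ≤ 2

/-- A short leg consists of a single vertex. -/
def IsShortLeg (T : SimpleGraph V) [DecidableRel T.Adj] (v x : V) : Prop :=
  IsStandardLeg T v x ∧ Branch T v x = {x}

/-- A long leg is a standard leg that is not short. -/
def IsLongLeg (T : SimpleGraph V) [DecidableRel T.Adj] (v x : V) : Prop :=
  IsStandardLeg T v x ∧ Branch T v x ≠ {x}

/-- A small core: degree exactly 3, with at least two standard legs, one of which is short. -/
def IsSmallCore (T : SimpleGraph V) [DecidableRel T.Adj] (v : V) : Prop :=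
  T.degree v = 3 ∧ ∃ x y : V, x ≠ y ∧ IsShortLeg T v x ∧ IsStandardLeg T v y

/-- A regular core is a core that is not small. -/
def IsRegularCore (T : SimpleGraph V) [DecidableRel T.Adj] (v : V) : Prop :=
  IsCore T v ∧ ¬ IsSmallCore T v

/-- A modified leg of `v`: a subtree of a neighbor of `v` containing exactly one core,
which is a small core. -/
def IsModifiedLeg (T : SimpleGraph V) [DecidableRel T.Adj] (v x : V) : Prop :=
  T.Adj v x ∧ ∃ u ∈ Branch T v x, IsSmallCore T u ∧
    ∀ w ∈ Branch T v x, IsCore T w → w = u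

/-- A g-leg is a standard leg or a modified leg. -/
def IsGLeg (T : SimpleGraph V) [DecidableRel T.Adj] (v x : V) : Prop :=
  IsStandardLeg T v x ∨ IsModifiedLeg T v x

/-- A minor core: a regular core which either (i) has at most one g-leg, or
(ii) has degree at least 4, no modified legs, exactly two standard legs one of which
is short, and every other subtree of a neighbor contains a regular core. -/
def IsMinorCore (T : SimpleGraph V) [DecidableRel T.Adj] (v : V) : Prop :=
  IsRegularCore T v ∧
  ((∀ x y : V, IsGLeg T v x → IsGLeg T v y → x = y) ∨
   (4 ≤ T.degree v ∧ (∀ x : V, ¬ IsModifiedLeg T v x) ∧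
    (∃ x y : V, x ≠ y ∧ IsShortLeg T v x ∧ IsStandardLeg T v y ∧
      ∀ z : V, IsStandardLeg T v z → z = x ∨ z = y) ∧
    (∀ z : V, T.Adj v z → ¬ IsGLeg T v z → ∃ w ∈ Branch T v z, IsRegularCore T w)))

/-- A main core is a regular core that is not minor. -/
def IsMainCore (T : SimpleGraph V) [DecidableRel T.Adj] (v : V) : Prop :=
  IsRegularCore T v ∧ ¬ IsMinorCore T v

/-- The vertices lying on g-legs of `v`. -/
def GLegVerts (T : SimpleGraph V) [DecidableRel T.Adj] (v : V) : Set V :=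
  {w | ∃ x : V, IsGLeg T v x ∧ w ∈ Branch T v x}

/-- Type (s,0) solution on the leg of neighbor `x` of `v`: the empty set. -/
def SolS0 (T : SimpleGraph V) (v x : V) (S : Set V) : Prop :=
  S ∩ Branch T v x = ∅

/-- Type (s,1) solution: one vertex of the leg whose position is at least 2. -/
def SolS1 (T : SimpleGraph V) (v x : V) (S : Set V) : Prop :=
  ∃ w : V, S ∩ Branch T v x = {w} ∧ 2 ≤ T.dist v w

/-- Type (s,2) solution: at least two vertices of the leg. -/
def SolS2 (T : SimpleGraph V) (v x : V) (S : Set V) : Prop :=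
  ∃ w₁ ∈ S ∩ Branch T v x, ∃ w₂ ∈ S ∩ Branch T v x, w₁ ≠ w₂

/-- Type (s,3) solution: exactly the vertex with position 1 (that is, `x`). -/
def SolS3 (T : SimpleGraph V) (v x : V) (S : Set V) : Prop :=
  S ∩ Branch T v x = {x}

/-- For a modified leg `x` of `v`: `u` is its small core (at position `T.dist v u`),
and `a`, `b` are the two vertices at position `T.dist v u + 1`, where `b` is the
vertex of a short leg of `u` (the vertex `ℓ^b`) and `a` is the other one (`ℓ^a`). -/
def MLegPair (T : SimpleGraph V) [DecidableRel T.Adj] (v x u a b : V) : Prop :=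
  u ∈ Branch T v x ∧ IsSmallCore T u ∧ a ≠ b ∧
  a ∈ Branch T v x ∧ b ∈ Branch T v x ∧
  T.dist v a = T.dist v u + 1 ∧ T.dist v b = T.dist v u + 1 ∧
  IsShortLeg T u b

/-- Type (m,1) solution on the modified leg `x` of `v`: either `{ℓ^a}` or `{ℓ^b}`. -/
def SolM1 (T : SimpleGraph V) [DecidableRel T.Adj] (v x : V) (S : Set V) : Prop :=
  ∃ u a b : V, MLegPair T v x u a b ∧
    (S ∩ Branch T v x = {a} ∨ S ∩ Branch T v x = {b})

/-- Type (m,2) solution: contains neither `ℓ^a` nor `ℓ^b`, contains at least two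
vertices of positions at least `i + 2`, and no vertex of position `i + 1`. -/
def SolM2 (T : SimpleGraph V) [DecidableRel T.Adj] (v x : V) (S : Set V) : Prop :=
  ∃ u a b : V, MLegPair T v x u a b ∧ a ∉ S ∧ b ∉ S ∧
    (∃ w₁ ∈ S ∩ Branch T v x, ∃ w₂ ∈ S ∩ Branch T v x, w₁ ≠ w₂ ∧
      T.dist v u + 2 ≤ T.dist v w₁ ∧ T.dist v u + 2 ≤ T.dist v w₂) ∧
    ∀ w ∈ S ∩ Branch T v x, T.dist v w ≠ T.dist v u + 1

/-- Type (m,3) solution: at least two vertices, one of which is `ℓ^a` or `ℓ^b`. -/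
def SolM3 (T : SimpleGraph V) [DecidableRel T.Adj] (v x : V) (S : Set V) : Prop :=
  ∃ u a b : V, MLegPair T v x u a b ∧
    (∃ w₁ ∈ S ∩ Branch T v x, ∃ w₂ ∈ S ∩ Branch T v x, w₁ ≠ w₂) ∧
    (a ∈ S ∨ b ∈ S)

/-- `S` is a local set for the core `v`. -/
def IsLocalSet (T : SimpleGraph V) [DecidableRel T.Adj] (v : V) (S : Set V) : Prop :=
  S ⊆ GLegVerts T v ∧
  -- (1) at most one standard leg has a type (s,0) solution, and every standard leg
  -- has a solution of one of the types (s,0), (s,1), (s,2), (s,3)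
  (∀ x y : V, IsStandardLeg T v x → IsStandardLeg T v y → x ≠ y →
    SolS0 T v x S → SolS0 T v y S → False) ∧
  (∀ x : V, IsStandardLeg T v x →
    SolS0 T v x S ∨ SolS1 T v x S ∨ SolS2 T v x S ∨ SolS3 T v x S) ∧
  -- (2) every modified leg has a solution of type (m,1), (m,2) or (m,3)
  (∀ x : V, IsModifiedLeg T v x →
    SolM1 T v x S ∨ SolM2 T v x S ∨ SolM3 T v x S) ∧
  -- (3) if some standard leg has a type (s,0) solution, no modified leg has type (m,1)
  ((∃ x : V, IsStandardLeg T v x ∧ SolS0 T v x S) →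
    ∀ y : V, IsModifiedLeg T v y → ¬ SolM1 T v y S) ∧
  -- (4) if some long leg has a type (s,0) solution, every other long leg has type (s,2)
  (∀ x : V, IsLongLeg T v x → SolS0 T v x S →
    ∀ y : V, IsLongLeg T v y → y ≠ x → SolS2 T v y S) ∧
  -- (5) if some short leg has a type (s,0) solution, every long leg has type (s,2) or (s,3)
  ((∃ x : V, IsShortLeg T v x ∧ SolS0 T v x S) →
    ∀ y : V, IsLongLeg T v y → SolS2 T v y S ∨ SolS3 T v y S)

/-- A local set is thrifty if its solutions of types (s,2), (m,2) and (m,3)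
consist of exactly two vertices each. -/
def IsThrifty (T : SimpleGraph V) [DecidableRel T.Adj] (v : V) (S : Set V) : Prop :=
  (∀ x : V, IsStandardLeg T v x → SolS2 T v x S → (S ∩ Branch T v x).ncard = 2) ∧
  (∀ x : V, IsModifiedLeg T v x → (SolM2 T v x S ∨ SolM3 T v x S) →
    (S ∩ Branch T v x).ncard = 2)

namespace SimpleGraph

variable {V : Type*} {G : SimpleGraph V} {u v w : V}

lemma dist_add_dist_of_mem_support {p : G.Walk u w} (hp : p.length = G.dist u w)
    (hv : v ∈ p.support) : G.dist u v + G.dist v w = G.dist u w := by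
  classical
  have hsplit := congrArg Walk.length (p.take_spec hv)
  rw [Walk.length_append] at hsplit
  obtain ⟨q, hq⟩ := (p.takeUntil v hv).reachable.exists_walk_length_eq_dist
  obtain ⟨r, hr⟩ := (p.dropUntil v hv).reachable.exists_walk_length_eq_dist
  have := G.dist_le (q.append r)
  have := G.dist_le (p.takeUntil v hv)
  have := G.dist_le (p.dropUntil v hv)
  rw [Walk.length_append] at *
  omega

lemma IsTree.length_eq_dist (hG : G.IsTree) {p : G.Walk u v} (hp : p.IsPath) :
    p.length = G.dist u v := by
  obtain ⟨q, hq, hql⟩ := hG.connected.exists_path_of_dist u v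
  rw [(hG.existsUnique_path u v).unique hp hq, hql]

lemma eq_of_adj_of_degree_le_two [Fintype (G.neighborSet v)] (hv : G.degree v ≤ 2)
    {a x y : V} (ha : G.Adj v a) (hx : G.Adj v x) (hy : G.Adj v y) (hxa : x ≠ a) (hya : y ≠ a) :
    x = y := by
  classical
  by_contra hxy
  have hsub : ({a, x, y} : Finset V) ⊆ G.neighborFinset v := by
    intro z hz
    simp only [Finset.mem_insert, Finset.mem_singleton] at hz
    rcases hz with rfl | rfl | rfl <;> simpa
  have := Finset.card_le_card hsub
  rw [Finset.card_eq_three.mpr ⟨a, x, y, hxa.symm, hya.symm, hxy, rfl⟩, card_neighborFinset_eq_degree]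
    at this
  omega

lemma eq_or_eq_or_eq_of_adj_of_degree_eq_three [Fintype (G.neighborSet v)] (hv : G.degree v = 3)
    {a x y z : V} (ha : G.Adj v a) (hx : G.Adj v x) (hy : G.Adj v y) (hxa : x ≠ a) (hya : y ≠ a)
    (hxy : x ≠ y) (hz : G.Adj v z) : z = a ∨ z = x ∨ z = y := by
  classical
  by_contra! hne
  have hsub : ({z, a, x, y} : Finset V) ⊆ G.neighborFinset v := by
    intro t ht
    simp only [Finset.mem_insert, Finset.mem_singleton] at ht
    rcases ht with rfl | rfl | rfl | rfl <;> simpa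
  have := Finset.card_le_card hsub
  rw [Finset.card_insert_of_notMem (by simp [hne.1, hne.2.1, hne.2.2]),
    Finset.card_eq_three.mpr ⟨a, x, y, hxa.symm, hya.symm, hxy, rfl⟩,
    card_neighborFinset_eq_degree] at this
  omega

end SimpleGraph

section Branch

variable {V : Type*} {T : SimpleGraph V} {a b v w x y z : V}

lemma mem_branch : w ∈ Branch T v x ↔ T.dist v w = T.dist x w + 1 := Iff.rfl

lemma notMem_branch_self : v ∉ Branch T v x := by
  simp [Branch]

lemma mem_branch_self (h : T.Adj v x) : x ∈ Branch T v x := by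
  simp [Branch, dist_eq_one_iff_adj.mpr h]

lemma one_le_dist_of_mem_branch (hw : w ∈ Branch T v x) : 1 ≤ T.dist v w := by
  rw [mem_branch] at hw
  omega

lemma notMem_branch_iff (hT : T.IsTree) (hab : T.Adj a b) :
    w ∉ Branch T a b ↔ w ∈ Branch T b a := by
  rw [mem_branch, mem_branch]
  rcases hT.dist_eq_dist_add_one_of_adj w hab with h | h <;>
    rw [dist_comm (u := a), dist_comm (u := b)] <;> omega

/-- Otherwise bypassing `x ⇝ w ⇝ z` gives a path `v, x, …, z` of length
`dist x z + 1 = dist v z + 2`. -/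
lemma mem_support_of_mem_branch (hT : T.IsTree) (hvx : T.Adj v x) (hw : w ∈ Branch T v x)
    (hz : z ∉ Branch T v x) (q : T.Walk z w) : v ∈ q.support := by
  classical
  by_contra hvq
  obtain ⟨s, hs⟩ := hT.connected.exists_walk_length_eq_dist x w
  have hvs : v ∉ s.support := fun hv => by
    have := dist_add_dist_of_mem_support hs hv
    rw [mem_branch] at hw
    rw [dist_comm, dist_eq_one_iff_adj.mpr hvx] at this
    omega
  set r := (s.append q.reverse).bypass
  have hr : r.IsPath := Walk.bypass_isPath _
  have hvr : v ∉ r.support := fun hv => by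
    have := (s.append q.reverse).support_bypass_subset_support hv
    rw [Walk.mem_support_append_iff, Walk.support_reverse, List.mem_reverse] at this
    exact this.elim hvs hvq
  have hlen := hT.length_eq_dist (hr.cons hvr (h := hvx))
  rw [Walk.length_cons, hT.length_eq_dist hr] at hlen
  have := (notMem_branch_iff hT hvx).mp hz
  rw [mem_branch] at this
  omega

lemma dist_eq_dist_add_dist_of_mem_branch (hT : T.IsTree) (hvx : T.Adj v x)
    (hw : w ∈ Branch T v x) (hz : z ∉ Branch T v x) :
    T.dist z w = T.dist z v + T.dist v w := by
  obtain ⟨q, hq⟩ := hT.connected.exists_walk_length_eq_dist z w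
  exact (dist_add_dist_of_mem_support hq (mem_support_of_mem_branch hT hvx hw hz q)).symm

lemma exists_adj_mem_branch (hT : T.IsTree) (hwv : w ≠ v) :
    ∃ x, T.Adj v x ∧ w ∈ Branch T v x := by
  obtain ⟨p, hp, hpl⟩ := hT.connected.exists_path_of_dist v w
  cases p with
  | nil => exact absurd rfl hwv
  | @cons _ x _ hvx q =>
    refine ⟨x, hvx, ?_⟩
    have := T.dist_le q
    have := hT.connected.dist_triangle (u := v) (v := x) (w := w)
    rw [dist_eq_one_iff_adj.mpr hvx] at this
    simp only [Walk.length_cons] at hpl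
    rw [mem_branch]
    omega

lemma eq_of_mem_branch_of_mem_branch (hT : T.IsTree) (hvx : T.Adj v x) (hvy : T.Adj v y)
    (hwx : w ∈ Branch T v x) (hwy : w ∈ Branch T v y) : x = y := by
  by_contra hxy
  have hx : x ∉ Branch T v y := fun h => by
    rw [mem_branch, dist_eq_one_iff_adj.mpr hvx] at h
    exact hxy (hT.connected.dist_eq_zero_iff.mp (by omega)).symm
  have := dist_eq_dist_add_dist_of_mem_branch hT hvy hwy hx
  rw [mem_branch] at hwx
  rw [dist_comm (u := x) (v := v), dist_eq_one_iff_adj.mpr hvx] at this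
  omega

lemma branch_subset_branch (hT : T.IsTree) (hab : T.Adj a b) (hbz : T.Adj b z) (hza : z ≠ a) :
    Branch T b z ⊆ Branch T a b := by
  have ha : a ∉ Branch T b z := fun h =>
    hza (eq_of_mem_branch_of_mem_branch hT hbz hab.symm h (mem_branch_self hab.symm))
  intro w hw
  have := dist_eq_dist_add_dist_of_mem_branch hT hbz hw ha
  rw [mem_branch] at hw ⊢
  rw [dist_eq_one_iff_adj.mpr hab] at this
  omega

lemma exists_adj_mem_branch_of_mem_branch (hT : T.IsTree) (hab : T.Adj a b)
    (hw : w ∈ Branch T a b) (hwb : w ≠ b) : ∃ z, T.Adj b z ∧ z ≠ a ∧ w ∈ Branch T b z := by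
  obtain ⟨z, hbz, hwz⟩ := exists_adj_mem_branch hT hwb
  refine ⟨z, hbz, ?_, hwz⟩
  rintro rfl
  exact (notMem_branch_iff hT hab).mpr hwz hw

lemma dist_lt_dist_of_mem_branch (hT : T.IsTree) (hvx : T.Adj v x) (hw : w ∈ Branch T v x)
    (hz : z ∉ Branch T v x) : T.dist z v < T.dist z w := by
  have := dist_eq_dist_add_dist_of_mem_branch hT hvx hw hz
  have := one_le_dist_of_mem_branch hw
  omega

end Branch

section Cores

variable {V : Type*} [Fintype V] {T : SimpleGraph V} [DecidableRel T.Adj] {a b v w x z : V}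

lemma IsStandardLeg.not_isCore (h : IsStandardLeg T v x) (hw : w ∈ Branch T v x) :
    ¬ IsCore T w := by
  have := h.2 w hw
  unfold IsCore
  omega

lemma isModifiedLeg_of_isSmallCore (hT : T.IsTree) (hab : T.Adj a b)
    (hout : ∃ r ∈ Branch T b a, IsCore T r) (hb : IsSmallCore T b) : IsModifiedLeg T a b := by
  obtain ⟨r, hr, hrcore⟩ := hout
  obtain ⟨hdeg, x, y, hxy, hx, hy⟩ := hb
  have hxa : x ≠ a := by rintro rfl; exact hx.1.not_isCore hr hrcore
  have hya : y ≠ a := by rintro rfl; exact hy.not_isCore hr hrcore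
  refine ⟨hab, b, mem_branch_self hab, ⟨hdeg, x, y, hxy, hx, hy⟩, fun w hw hwcore => ?_⟩
  by_contra hwb
  obtain ⟨z, hbz, hza, hwz⟩ := exists_adj_mem_branch_of_mem_branch hT hab hw hwb
  rcases eq_or_eq_or_eq_of_adj_of_degree_eq_three hdeg hab.symm hx.1.1 hy.1 hxa hya
    hxy hbz with rfl | rfl | rfl
  · exact hza rfl
  · exact hx.1.not_isCore hwz hwcore
  · exact hy.not_isCore hwz hwcore

lemma IsModifiedLeg.of_not_isCore (hT : T.IsTree) (hab : T.Adj a b) (hbz : T.Adj b z)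
    (hza : z ≠ a) (hb : ¬ IsCore T b) (h : IsModifiedLeg T b z) : IsModifiedLeg T a b := by
  obtain ⟨-, u, hu, husmall, huniq⟩ := h
  refine ⟨hab, u, branch_subset_branch hT hab hbz hza hu, husmall, fun w hw hwcore => ?_⟩
  obtain ⟨z', hbz', hz'a, hwz'⟩ :=
    exists_adj_mem_branch_of_mem_branch hT hab hw (by rintro rfl; exact hb hwcore)
  have hz' : z' = z := eq_of_adj_of_degree_le_two
    (by unfold IsCore at hb; omega) hab.symm hbz' hbz hz'a hza
  exact huniq w (hz' ▸ hwz') hwcore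

theorem isModifiedLeg_of_forall_not_isRegularCore (hT : T.IsTree) (hab : T.Adj a b)
    (hout : ∃ r ∈ Branch T b a, IsCore T r) (hin : ∃ c ∈ Branch T a b, IsCore T c)
    (hreg : ∀ w ∈ Branch T a b, ¬ IsRegularCore T w) : IsModifiedLeg T a b := by
  induction hn : (Branch T a b).ncard using Nat.strong_induction_on generalizing a b with
  | _ n ih =>
  by_cases hb : IsCore T b
  · exact isModifiedLeg_of_isSmallCore hT hab hout
      (not_not.1 fun hs => hreg b (mem_branch_self hab) ⟨hb, hs⟩)
  obtain ⟨c, hc, hccore⟩ := hin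
  obtain ⟨z, hbz, hza, hcz⟩ :=
    exists_adj_mem_branch_of_mem_branch hT hab hc (by rintro rfl; exact hb hccore)
  have hsub := branch_subset_branch hT hab hbz hza
  have hlt : (Branch T b z).ncard < n :=
    hn ▸ Set.ncard_lt_ncard ⟨hsub, fun h => notMem_branch_self (h (mem_branch_self hab))⟩
  obtain ⟨r, hr, hrcore⟩ := hout
  exact (ih _ hlt hbz ⟨r, branch_subset_branch hT hbz.symm hab.symm hza.symm hr, hrcore⟩
    ⟨c, hcz, hccore⟩ (fun w hw => hreg w (hsub hw)) rfl).of_not_isCore hT hab hbz hza hb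

lemma exists_isRegularCore_of_not_isGLeg (hT : T.IsTree) (hv : IsCore T v) (hvx : T.Adj v x)
    (hx : ¬ IsGLeg T v x) : ∃ w ∈ Branch T v x, IsRegularCore T w := by
  by_contra! hreg
  by_cases hcore : ∃ c ∈ Branch T v x, IsCore T c
  · exact hx (Or.inr (isModifiedLeg_of_forall_not_isRegularCore hT hvx
      ⟨v, mem_branch_self hvx.symm, hv⟩ hcore hreg))
  · push Not at hcore
    exact hx (Or.inl ⟨hvx, fun w hw => by have := hcore w hw; unfold IsCore at this; omega⟩)

lemma IsMinorCore.exists_two_not_isGLeg (h : IsMinorCore T v) :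
    ∃ x y, x ≠ y ∧ T.Adj v x ∧ T.Adj v y ∧ ¬ IsGLeg T v x ∧ ¬ IsGLeg T v y := by
  classical
  set N := T.neighborFinset v
  have hsplit := Finset.card_filter_add_card_filter_not (s := N) (p := IsGLeg T v)
  have hgleg : (N.filter (IsGLeg T v)).card + 2 ≤ N.card := by
    rw [card_neighborFinset_eq_degree]
    rcases h with ⟨⟨hcore, -⟩, hone | ⟨hdeg, hnomod, ⟨x, y, -, -, -, hstd⟩, -⟩⟩
    · have : (N.filter (IsGLeg T v)).card ≤ 1 := Finset.card_le_one.mpr fun x hx y hy =>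
        hone x y (Finset.mem_filter.1 hx).2 (Finset.mem_filter.1 hy).2
      unfold IsCore at hcore
      omega
    · have hsub : N.filter (IsGLeg T v) ⊆ {x, y} := fun z hz => by
        rcases (Finset.mem_filter.1 hz).2 with hz | hz
        · rcases hstd z hz with rfl | rfl <;> simp
        · exact absurd hz (hnomod z)
      have := (Finset.card_le_card hsub).trans Finset.card_le_two
      omega
  obtain ⟨x, hx, y, hy, hxy⟩ := Finset.one_lt_card.mp (by omega :
    1 < (N.filter (¬ IsGLeg T v ·)).card)
  simp only [Finset.mem_filter, mem_neighborFinset, N] at hx hy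
  exact ⟨x, y, hxy, hx.1, hy.1, hx.2, hy.2⟩

end Cores

/-- a tree with a regular core has a main core. -/
theorem regular_core_implies_main_core
    (T : SimpleGraph V) [DecidableRel T.Adj] (hT : T.IsTree)
    (h : ∃ v : V, IsRegularCore T v) :
    ∃ v : V, IsMainCore T v := by
  obtain ⟨v₀, hv₀⟩ := h
  obtain ⟨v, hv, hmax⟩ := Set.Finite.exists_maximalFor (T.dist v₀) {v | IsRegularCore T v}
    (Set.toFinite _) ⟨v₀, hv₀⟩
  refine ⟨v, hv, fun hminor => ?_⟩
  obtain ⟨x, y, hxy, hvx, hvy, hx, hy⟩ := hminor.exists_two_not_isGLeg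
  wlog hv₀x : v₀ ∉ Branch T v x generalizing x y
  · exact this y x hxy.symm hvy hvx hy hx
      fun hv₀y => hxy (eq_of_mem_branch_of_mem_branch hT hvx hvy (not_not.1 hv₀x) hv₀y)
  obtain ⟨w, hw, hwreg⟩ := exists_isRegularCore_of_not_isGLeg hT hv.1 hvx hx
  have hfar := dist_lt_dist_of_mem_branch hT hvx hw hv₀x
  exact hfar.not_ge (hmax hwreg hfar.le)
end

section
/- Let T be a tree and L ⊆ V a set of vertices such that for every core v of T, the subset of L restricted to the vertices of the g-legs of v is a local set for v. Then for every core v and every pair of distinct vertices x,y ∉ L lying on g-legs of v with d(x,v) = d(y,v) (i.e., with equal positions on the g-legs of v), there are at least two vertices of L separating x and y. -/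
open SimpleGraph

variable {V : Type*} [Fintype V] [DecidableEq V]

set_option linter.unusedSectionVars false
set_option maxHeartbeats 1000000

section TreeTools
variable {T : SimpleGraph V}

private lemma tree_path_length (hT : T.IsTree) {u w : V} {p : T.Walk u w} (hp : p.IsPath) :
    p.length = T.dist u w := by
  obtain ⟨q, hq, hql⟩ := hT.isConnected.exists_path_of_dist u w
  have h : (⟨p, hp⟩ : T.Path u w) = ⟨q, hq⟩ := hT.IsAcyclic.path_unique _ _
  rw [← hql]
  exact congrArg Walk.length (congrArg Subtype.val h)

private lemma dist_split (hT : T.IsTree) {u w z : V} {p : T.Walk u w}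
    (hl : p.length = T.dist u w) (hz : z ∈ p.support) :
    T.dist u z + T.dist z w = T.dist u w := by
  have h1 : T.dist u z ≤ (p.takeUntil z hz).length := dist_le _
  have h2 : T.dist z w ≤ (p.dropUntil z hz).length := dist_le _
  have h3 : (p.takeUntil z hz).length + (p.dropUntil z hz).length = p.length := by
    rw [← Walk.length_append, Walk.take_spec]
  have h4 : T.dist u w ≤ T.dist u z + T.dist z w := hT.isConnected.dist_triangle
  omega

private lemma adj_dist_dichotomy (hT : T.IsTree) {a b : V} (hab : T.Adj a b) (w : V) :
    T.dist a w = T.dist b w + 1 ∨ T.dist b w = T.dist a w + 1 := by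
  obtain ⟨p, hp, hl⟩ := hT.isConnected.exists_path_of_dist w a
  by_cases hb : b ∈ p.support
  · left
    have hsp := dist_split hT hl hb
    have h1 : T.dist b a = 1 := dist_eq_one_iff_adj.mpr hab.symm
    have c1 : T.dist a w = T.dist w a := dist_comm
    have c2 : T.dist b w = T.dist w b := dist_comm
    omega
  · right
    have hq : (Walk.cons hab.symm p.reverse).IsPath := by
      refine hp.reverse.cons ?_
      simpa [Walk.support_reverse] using hb
    have hlen := tree_path_length hT hq
    simp only [Walk.length_cons, Walk.length_reverse] at hlen
    have c : T.dist a w = T.dist w a := dist_comm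
    omega

private lemma mem_branch_iff {v x₀ w : V} :
    w ∈ Branch T v x₀ ↔ T.dist v w = T.dist x₀ w + 1 := Iff.rfl

private lemma branch_or (hT : T.IsTree) {v x₀ : V} (hvx : T.Adj v x₀) (w : V) :
    w ∈ Branch T v x₀ ∨ T.dist x₀ w = T.dist v w + 1 :=
  adj_dist_dichotomy hT hvx w

private lemma branch_self (hvx : T.Adj v x₀) : x₀ ∈ Branch T v x₀ := by
  rw [mem_branch_iff, dist_self, dist_eq_one_iff_adj]
  exact hvx

private lemma center_notMem_branch {v x₀ : V} : v ∉ Branch T v x₀ := by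
  rw [mem_branch_iff, dist_self]
  omega

private lemma branch_pos {v x₀ w : V} (hw : w ∈ Branch T v x₀) : 1 ≤ T.dist v w := by
  rw [mem_branch_iff] at hw; omega

private lemma branch_base (hT : T.IsTree) {v x₀ w : V} (hw : w ∈ Branch T v x₀)
    (h1 : T.dist v w = 1) : w = x₀ := by
  rw [mem_branch_iff] at hw
  have : T.dist x₀ w = 0 := by omega
  exact ((hT.isConnected.dist_eq_zero_iff).mp this).symm

private lemma cross_eq (hT : T.IsTree) {v x₀ s t : V} (hvx : T.Adj v x₀)
    (hst : T.Adj s t) (hs : s ∈ Branch T v x₀) (ht : t ∉ Branch T v x₀) :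
    s = x₀ ∧ t = v := by
  have hconn := hT.isConnected
  have ht' : T.dist x₀ t = T.dist v t + 1 := (branch_or hT hvx t).resolve_left ht
  obtain ⟨p1, hp1, hl1⟩ := hconn.exists_path_of_dist t v
  obtain ⟨p2, hp2, hl2⟩ := hconn.exists_path_of_dist x₀ s
  have hP1 : ∀ z ∈ p1.support, z ∉ Branch T v x₀ := by
    intro z hzs hzB
    rw [mem_branch_iff] at hzB
    have hsp := dist_split hT hl1 hzs
    have htr : T.dist x₀ t ≤ T.dist x₀ z + T.dist z t := hconn.dist_triangle
    have c1 : T.dist z t = T.dist t z := dist_comm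
    have c2 : T.dist z v = T.dist v z := dist_comm
    have c3 : T.dist v t = T.dist t v := dist_comm
    omega
  have hP2 : ∀ z ∈ p2.support, z ∈ Branch T v x₀ := by
    intro z hzs
    rcases branch_or hT hvx z with h | h
    · exact h
    · exfalso
      rw [mem_branch_iff] at hs
      have hsp := dist_split hT hl2 hzs
      have htr : T.dist v s ≤ T.dist v z + T.dist z s := hconn.dist_triangle
      omega
  have hq : (p1.append (Walk.cons hvx p2)).IsPath := by
    rw [Walk.isPath_def, Walk.support_append, Walk.support_cons, List.tail_cons]
    refine List.Nodup.append ((Walk.isPath_def _).mp hp1) ((Walk.isPath_def _).mp hp2) ?_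
    intro z hz1 hz2
    exact hP1 z hz1 (hP2 z hz2)
  have hone : (Walk.cons hst.symm (Walk.nil : T.Walk s s)).IsPath := by
    rw [Walk.isPath_def, Walk.support_cons, Walk.support_nil]
    simp [hst.ne']
  have heq : (⟨p1.append (Walk.cons hvx p2), hq⟩ : T.Path t s)
      = ⟨Walk.cons hst.symm Walk.nil, hone⟩ := hT.IsAcyclic.path_unique _ _
  have hlen : (p1.append (Walk.cons hvx p2)).length
      = (Walk.cons hst.symm (Walk.nil : T.Walk s s)).length :=
    congrArg Walk.length (congrArg Subtype.val heq)
  simp only [Walk.length_append, Walk.length_cons, Walk.length_nil] at hlen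
  have h1 : T.dist t v = 0 := by omega
  have h2 : T.dist x₀ s = 0 := by omega
  exact ⟨((hconn.dist_eq_zero_iff).mp h2).symm, (hconn.dist_eq_zero_iff).mp h1⟩

private lemma walk_crosses (hT : T.IsTree) {v x₀ : V} (hvx : T.Adj v x₀) :
    ∀ {z w : V} (p : T.Walk z w), z ∈ Branch T v x₀ → w ∉ Branch T v x₀ →
      v ∈ p.support := by
  intro z w p
  induction p with
  | nil => intro hz hw; exact absurd hz hw
  | @cons z z₁ w h p ih =>
    intro hz hw
    by_cases hb : z₁ ∈ Branch T v x₀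
    · rw [Walk.support_cons]
      exact List.mem_cons_of_mem _ (ih hb hw)
    · have := (cross_eq hT hvx h hz hb).2
      rw [Walk.support_cons, ← this]
      exact List.mem_cons_of_mem _ p.start_mem_support

private lemma cross_dist (hT : T.IsTree) {v x₀ z w : V} (hvx : T.Adj v x₀)
    (hz : z ∈ Branch T v x₀) (hw : w ∉ Branch T v x₀) :
    T.dist w z = T.dist w v + T.dist v z := by
  obtain ⟨p, hp, hl⟩ := hT.isConnected.exists_path_of_dist z w
  have hv := walk_crosses hT hvx p hz hw
  have hsp := dist_split hT hl hv
  have c1 : T.dist z v = T.dist v z := dist_comm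
  have c2 : T.dist z w = T.dist w z := dist_comm
  have c3 : T.dist v w = T.dist w v := dist_comm
  omega

private lemma exists_pred (hT : T.IsTree) {u w : V} (h : 1 ≤ T.dist u w) :
    ∃ n, T.Adj u n ∧ T.dist n w + 1 = T.dist u w := by
  obtain ⟨p, hp, hl⟩ := hT.isConnected.exists_path_of_dist u w
  cases p with
  | nil => rw [← hl] at h; simp at h
  | @cons _ n _ hadj p' =>
    refine ⟨n, hadj, ?_⟩
    have h1 : T.dist n w ≤ p'.length := dist_le _
    have h2 : T.dist u w ≤ T.dist u n + T.dist n w := hT.isConnected.dist_triangle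
    have h3 : T.dist u n = 1 := dist_eq_one_iff_adj.mpr hadj
    rw [Walk.length_cons] at hl
    omega

private lemma pred_in_branch (hT : T.IsTree) {v x₀ z : V} (hvx : T.Adj v x₀)
    (hz : z ∈ Branch T v x₀) (h2 : 2 ≤ T.dist v z) :
    ∃ z', z' ∈ Branch T v x₀ ∧ T.Adj z z' ∧ T.dist v z' + 1 = T.dist v z := by
  rw [mem_branch_iff] at hz
  have hvx1 : T.dist v x₀ = 1 := dist_eq_one_iff_adj.mpr hvx
  have hx : 1 ≤ T.dist z x₀ := by
    have c : T.dist z x₀ = T.dist x₀ z := dist_comm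
    omega
  obtain ⟨n, hzn, hn⟩ := exists_pred hT hx
  have c4 : T.dist z x₀ = T.dist x₀ z := dist_comm
  have hd := adj_dist_dichotomy hT hzn v
  have htr : T.dist v n ≤ T.dist v x₀ + T.dist x₀ n := hT.isConnected.dist_triangle
  have c1 : T.dist z v = T.dist v z := dist_comm
  have c2 : T.dist n v = T.dist v n := dist_comm
  have c3 : T.dist n x₀ = T.dist x₀ n := dist_comm
  refine ⟨n, ?_, hzn, by omega⟩
  rw [mem_branch_iff]
  omega

variable [DecidableRel T.Adj]

private lemma unique_pos (hT : T.IsTree) {v x₀ : V} (hvx : T.Adj v x₀) (k : ℕ)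
    (hdeg : ∀ w ∈ Branch T v x₀, T.dist v w < k → T.degree w ≤ 2) :
    ∀ n : ℕ, ∀ z ∈ Branch T v x₀, ∀ z' ∈ Branch T v x₀,
      T.dist v z = n → T.dist v z' = n → n ≤ k → z = z' := by
  intro n
  induction n using Nat.strong_induction_on with
  | _ n ih =>
    intro z hz z' hz' hn hn' hnk
    match n, hn, hn', hnk with
    | 0, hn, hn', hnk => exact absurd hn (by have := branch_pos hz; omega)
    | 1, hn, hn', hnk => rw [branch_base hT hz hn, branch_base hT hz' hn']
    | (m+2), hn, hn', hnk =>
      obtain ⟨z₁, hz₁B, hadj₁, hd₁⟩ := pred_in_branch hT hvx hz (by omega)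
      obtain ⟨z₁', hz₁B', hadj₁', hd₁'⟩ := pred_in_branch hT hvx hz' (by omega)
      have hz₁eq : z₁ = z₁' := ih (m+1) (by omega) z₁ hz₁B z₁' hz₁B'
        (by omega) (by omega) (by omega)
      subst hz₁eq
      by_contra hne
      -- find third neighbor t₁ of z₁ with smaller position
      obtain ⟨t₁, hadjt, hdt⟩ : ∃ t₁, T.Adj z₁ t₁ ∧ T.dist v t₁ + 1 = T.dist v z₁ := by
        by_cases hm : m = 0
        · subst hm
          have : z₁ = x₀ := branch_base hT hz₁B (by omega)
          subst this
          exact ⟨v, hvx.symm, by rw [dist_self]; omega⟩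
        · obtain ⟨t₁, _, h1, h2⟩ := pred_in_branch hT hvx hz₁B (by omega)
          exact ⟨t₁, h1, h2⟩
      have hdz₁ : T.degree z₁ ≤ 2 := hdeg z₁ hz₁B (by omega)
      have hzt : z ≠ t₁ := by intro h; rw [h] at hn; omega
      have hzt' : z' ≠ t₁ := by intro h; rw [h] at hn'; omega
      have hsub : ({z, z', t₁} : Finset V) ⊆ T.neighborFinset z₁ := by
        intro c hc
        simp only [Finset.mem_insert, Finset.mem_singleton] at hc
        rw [mem_neighborFinset]
        rcases hc with rfl | rfl | rfl
        · exact hadj₁.symm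
        · exact hadj₁'.symm
        · exact hadjt
      have hcard : ({z, z', t₁} : Finset V).card = 3 := by
        rw [Finset.card_insert_of_notMem (by simp [hne, hzt]),
          Finset.card_insert_of_notMem (by simp [hzt']), Finset.card_singleton]
      have := Finset.card_le_card hsub
      rw [card_neighborFinset_eq_degree] at this
      omega

private lemma mleg_analysis (hT : T.IsTree) {v z₀ u a b : V}
    (hvz : T.Adj v z₀)
    (hdeg2 : ∀ w ∈ Branch T v z₀, w ≠ u → T.degree w ≤ 2)
    (hu : u ∈ Branch T v z₀) (hdeg3 : T.degree u = 3)
    (hab : a ≠ b) (haB : a ∈ Branch T v z₀) (hbB : b ∈ Branch T v z₀)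
    (hda : T.dist v a = T.dist v u + 1) (hdb : T.dist v b = T.dist v u + 1)
    (hadjb : T.Adj u b) (hshort : Branch T u b = {b}) :
    (∀ x ∈ Branch T v z₀, ∀ y ∈ Branch T v z₀, T.dist v x = T.dist v y → x ≠ y →
      (x = a ∧ y = b) ∨ (x = b ∧ y = a)) ∧
    (∀ w ∈ Branch T v z₀, T.dist v u + 2 ≤ T.dist v w → w ∈ Branch T u a) := by
  have hconn := hT.isConnected
  have hpu1 : 1 ≤ T.dist v u := branch_pos hu
  have hUb : ∀ w ∈ Branch T v z₀, T.dist v w < T.dist v u → T.degree w ≤ 2 := by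
    intro w hw hlt
    exact hdeg2 w hw (by intro h; rw [h] at hlt; omega)
  -- a is adjacent to u
  have hadja : T.Adj u a := by
    obtain ⟨a₁, ha₁B, hadj, hd⟩ := pred_in_branch hT hvz haB (by omega)
    have : a₁ = u := unique_pos hT hvz (T.dist v u) hUb (T.dist v u) a₁ ha₁B u hu
      (by omega) rfl le_rfl
    rw [this] at hadj
    exact hadj.symm
  -- third neighbor t of u
  obtain ⟨t, hadjt, hdt⟩ : ∃ t, T.Adj u t ∧ T.dist v t + 1 = T.dist v u := by
    by_cases h1 : T.dist v u = 1
    · have : u = z₀ := branch_base hT hu h1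
      subst this
      exact ⟨v, hvz.symm, by rw [dist_self]; omega⟩
    · obtain ⟨t, _, h2, h3⟩ := pred_in_branch hT hvz hu (by omega)
      exact ⟨t, h2, h3⟩
  have hta : t ≠ a := by intro h; rw [h] at hdt; omega
  have htb : t ≠ b := by intro h; rw [h] at hdt; omega
  -- neighbors of u are exactly {t, a, b}
  have hnbr : ∀ n, T.Adj u n → n = t ∨ n = a ∨ n = b := by
    have hsub : ({t, a, b} : Finset V) ⊆ T.neighborFinset u := by
      intro c hc
      simp only [Finset.mem_insert, Finset.mem_singleton] at hc
      rw [mem_neighborFinset]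
      rcases hc with rfl | rfl | rfl
      · exact hadjt
      · exact hadja
      · exact hadjb
    have hcard : ({t, a, b} : Finset V).card = 3 := by
      rw [Finset.card_insert_of_notMem (by simp [hta, htb]),
        Finset.card_insert_of_notMem (by simp [hab]), Finset.card_singleton]
    have heq : ({t, a, b} : Finset V) = T.neighborFinset u :=
      Finset.eq_of_subset_of_card_le hsub
        (by rw [card_neighborFinset_eq_degree, hdeg3, hcard])
    intro n hn
    have : n ∈ ({t, a, b} : Finset V) := by
      rw [heq, mem_neighborFinset]; exact hn
    simpa using this
  -- distance chain from u
  have chain : ∀ n : ℕ, ∀ w ∈ Branch T v z₀, T.dist v w = n → T.dist v u ≤ n →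
      T.dist u w + T.dist v u = n := by
    intro n
    induction n using Nat.strong_induction_on with
    | _ n ih =>
      intro w hw hwn hpun
      rcases Nat.eq_or_lt_of_le hpun with heq | hlt
      · have : w = u := unique_pos hT hvz (T.dist v u) hUb (T.dist v u) w hw u hu
          (by omega) rfl le_rfl
        rw [this, dist_self]
        omega
      · obtain ⟨w', hw'B, hadj', hd'⟩ := pred_in_branch hT hvz hw (by omega)
        have hih := ih (n-1) (by omega) w' hw'B (by omega) (by omega)
        have h1 : T.dist u w ≤ T.dist u w' + T.dist w' w := hconn.dist_triangle
        have h2 : T.dist w' w = 1 := dist_eq_one_iff_adj.mpr hadj'.symm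
        have h3 : T.dist v w ≤ T.dist v u + T.dist u w := hconn.dist_triangle
        omega
  -- vertices far below are in Branch u a
  have hS2 : ∀ w ∈ Branch T v z₀, T.dist v u + 2 ≤ T.dist v w → w ∈ Branch T u a := by
    intro w hw hfar
    have hch := chain (T.dist v w) w hw rfl (by omega)
    obtain ⟨n, hun, hn⟩ := exists_pred hT (u := u) (w := w) (by omega)
    have hwBn : w ∈ Branch T u n := by rw [mem_branch_iff]; omega
    rcases hnbr n hun with rfl | rfl | rfl
    · exfalso
      rw [mem_branch_iff] at hwBn
      have htr : T.dist v w ≤ T.dist v n + T.dist n w := hconn.dist_triangle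
      omega
    · exact hwBn
    · exfalso
      rw [hshort] at hwBn
      have : w = n := hwBn
      rw [this] at hfar
      omega
  refine ⟨?_, hS2⟩
  -- Branch u a is inside Branch T v z₀
  have hvnotua : v ∉ Branch T u a := by
    rw [mem_branch_iff]
    have c1 : T.dist u v = T.dist v u := dist_comm
    have c2 : T.dist a v = T.dist v a := dist_comm
    omega
  have hBua : ∀ w ∈ Branch T u a, w ∈ Branch T v z₀ ∧ w ≠ u ∧
      T.dist u w + T.dist v u = T.dist v w := by
    intro w hw
    have hcd : T.dist v w = T.dist v u + T.dist u w := cross_dist hT hadja hw hvnotua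
    have hz₀u : T.dist v u = T.dist z₀ u + 1 := hu
    have hwB : w ∈ Branch T v z₀ := by
      rcases branch_or hT hvz w with h | h
      · exact h
      · exfalso
        have htr : T.dist z₀ w ≤ T.dist z₀ u + T.dist u w := hconn.dist_triangle
        omega
    have hwu : w ≠ u := by
      intro h
      rw [h, mem_branch_iff, dist_self] at hw
      omega
    exact ⟨hwB, hwu, by omega⟩
  -- classify equal positions
  intro x hx y hy hxy hne
  rcases lt_trichotomy (T.dist v x) (T.dist v u + 1) with hlt | heq | hgt
  · exfalso
    exact hne (unique_pos hT hvz (T.dist v u) hUb (T.dist v x) x hx y hy rfl hxy.symm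
      (by omega))
  · -- position = dist v u + 1 : vertices are among {a, b}
    have hpos1 : ∀ w ∈ Branch T v z₀, T.dist v w = T.dist v u + 1 → w = a ∨ w = b := by
      intro w hw hwd
      obtain ⟨w₁, hw₁B, hadj₁, hd₁⟩ := pred_in_branch hT hvz hw (by omega)
      have hw₁u : w₁ = u := unique_pos hT hvz (T.dist v u) hUb (T.dist v u) w₁ hw₁B u hu
        (by omega) rfl le_rfl
      subst hw₁u
      rcases hnbr w hadj₁.symm with rfl | h | h
      · omega
      · exact Or.inl h
      · exact Or.inr h
    rcases hpos1 x hx heq with rfl | rfl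
    · rcases hpos1 y hy (by omega) with rfl | rfl
      · exact absurd rfl hne
      · exact Or.inl ⟨rfl, rfl⟩
    · rcases hpos1 y hy (by omega) with rfl | rfl
      · exact Or.inr ⟨rfl, rfl⟩
      · exact absurd rfl hne
  · exfalso
    have hxa : x ∈ Branch T u a := hS2 x hx (by omega)
    have hya : y ∈ Branch T u a := hS2 y hy (by omega)
    obtain ⟨_, _, hdx⟩ := hBua x hxa
    obtain ⟨_, _, hdy⟩ := hBua y hya
    refine hne (unique_pos hT hadja (T.dist u x) ?_ (T.dist u x) x hxa y hya rfl
      (by omega) le_rfl)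
    intro w hw _
    obtain ⟨hwB, hwu, _⟩ := hBua w hw
    exact hdeg2 w hwB hwu

private lemma branch_disjoint (hT : T.IsTree) {v p₀ q₀ w : V} (hne : p₀ ≠ q₀)
    (hp : T.Adj v p₀) (hq : T.Adj v q₀) (hw : w ∈ Branch T v p₀) :
    w ∉ Branch T v q₀ := by
  intro hw'
  have hp₀ : p₀ ∉ Branch T v q₀ := by
    intro h
    rw [mem_branch_iff] at h
    have h1 : T.dist v p₀ = 1 := dist_eq_one_iff_adj.mpr hp
    have h0 : T.dist q₀ p₀ = 0 := by omega
    exact hne ((hT.isConnected.dist_eq_zero_iff).mp h0).symm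
  have hcd : T.dist p₀ w = T.dist p₀ v + T.dist v w := cross_dist hT hq hw' hp₀
  rw [mem_branch_iff] at hw
  have c1 : T.dist p₀ v = T.dist v p₀ := dist_comm
  have c2 : T.dist p₀ w = T.dist w p₀ := dist_comm
  have h1 : T.dist v p₀ = 1 := dist_eq_one_iff_adj.mpr hp
  omega

private lemma sep_lemma (hT : T.IsTree) {v p₀ q₀ p q τ : V} (hne : p₀ ≠ q₀)
    (hadjp : T.Adj v p₀) (hadjq : T.Adj v q₀) (hp : p ∈ Branch T v p₀)
    (hq : q ∈ Branch T v q₀) (hpos : T.dist v p = T.dist v q)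
    (hτ : τ ∈ Branch T v p₀) : Separates T τ p q := by
  have hτq : τ ∉ Branch T v q₀ := branch_disjoint hT hne hadjp hadjq hτ
  have hdq : T.dist τ q = T.dist τ v + T.dist v q := cross_dist hT hadjq hq hτq
  have htr : T.dist τ p ≤ T.dist τ p₀ + T.dist p₀ p := hT.isConnected.dist_triangle
  rw [mem_branch_iff] at hτ hp
  have c1 : T.dist τ v = T.dist v τ := dist_comm
  have c2 : T.dist τ p₀ = T.dist p₀ τ := dist_comm
  have c3 : T.dist p₀ p = T.dist p₀ p := rfl
  show T.dist τ p ≠ T.dist τ q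
  intro hcon
  omega

private lemma sep_symm {τ p q : V} (h : Separates T τ p q) : Separates T τ q p :=
  Ne.symm h

end TreeTools
/-- if for every core `v` the restriction of `L` to the g-legs of `v`
is a local set, then every pair of distinct vertices outside `L` lying on g-legs of
`v` with equal positions (equal distances to `v`) has at least two separators in `L`. -/
theorem local_sets_separate_equal_positions
    (T : SimpleGraph V) [DecidableRel T.Adj] (hT : T.IsTree)
    (L : Set V)
    (hloc : ∀ v : V, IsCore T v → IsLocalSet T v (L ∩ GLegVerts T v)) :
    ∀ v : V, IsCore T v → ∀ x y : V,
      x ∈ GLegVerts T v → y ∈ GLegVerts T v → x ≠ y → x ∉ L → y ∉ L →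
      T.dist x v = T.dist y v → HasTwoSeparators T L x y := by
  intro v hv x y hx hy hxy hxL hyL hdvx
  obtain ⟨x₀, hxleg, hxB⟩ := hx
  obtain ⟨y₀, hyleg, hyB⟩ := hy
  have hS := hloc v hv
  have hconn := hT.isConnected
  have hpos : T.dist v x = T.dist v y := by
    have c1 : T.dist v x = T.dist x v := dist_comm
    have c2 : T.dist v y = T.dist y v := dist_comm
    omega
  have hadjx : T.Adj v x₀ := by rcases hxleg with h | h <;> exact h.1
  have hadjy : T.Adj v y₀ := by rcases hyleg with h | h <;> exact h.1
  have hSB : ∀ z₀, IsGLeg T v z₀ →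
      (L ∩ GLegVerts T v) ∩ Branch T v z₀ = L ∩ Branch T v z₀ := by
    intro z₀ hleg
    ext w
    simp only [Set.mem_inter_iff, GLegVerts, Set.mem_setOf_eq]
    constructor
    · rintro ⟨⟨h1, _⟩, h2⟩; exact ⟨h1, h2⟩
    · rintro ⟨h1, h2⟩; exact ⟨⟨h1, ⟨z₀, hleg, h2⟩⟩, h2⟩
  have hMne : ∀ z₀, IsModifiedLeg T v z₀ → (L ∩ Branch T v z₀).Nonempty := by
    intro z₀ hm
    rw [← hSB z₀ (Or.inr hm)]
    rcases hS.2.2.2.1 z₀ hm with ⟨u, a, b, hp, h | h⟩ |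
      ⟨u, a, b, hp, _, _, ⟨w₁, hw₁, _⟩, _⟩ | ⟨u, a, b, hp, ⟨w₁, hw₁, _⟩, _⟩
    · exact ⟨a, by rw [h]; rfl⟩
    · exact ⟨b, by rw [h]; rfl⟩
    · exact ⟨w₁, hw₁⟩
    · exact ⟨w₁, hw₁⟩
  by_cases hsame : x₀ = y₀
  · -- same g-leg
    subst hsame
    rcases hxleg with hstd | hmod
    · exact absurd (unique_pos hT hadjx (T.dist v x) (fun w hw _ => hstd.2 w hw)
        (T.dist v x) x hxB y hyB rfl hpos.symm le_rfl) hxy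
    · rcases hmod with ⟨hadj', u', hu'B, hsc', hcore⟩
      have hdeg2' : ∀ w ∈ Branch T v x₀, w ≠ u' → T.degree w ≤ 2 := by
        intro w hw hne
        by_contra hgt
        push_neg at hgt
        exact hne (hcore w hw hgt)
      have hmain : ∀ u a b, MLegPair T v x₀ u a b →
          ((x = a ∧ y = b) ∨ (x = b ∧ y = a)) ∧
          (∀ w ∈ Branch T v x₀, T.dist v u + 2 ≤ T.dist v w → w ∈ Branch T u a) ∧
          Branch T u b = {b} ∧ T.Adj u b := by
        intro u a b hpair
        obtain ⟨huB, hsc, habne, haB, hbB, hda, hdb, hshort⟩ := hpair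
        have huu' : u = u' := hcore u huB (le_of_eq hsc.1.symm)
        have hdeg2 : ∀ w ∈ Branch T v x₀, w ≠ u → T.degree w ≤ 2 := by
          intro w hw hne
          rw [huu'] at hne
          exact hdeg2' w hw hne
        obtain ⟨hS1, hS2⟩ := mleg_analysis hT hadjx hdeg2 huB hsc.1 habne haB hbB
          hda hdb hshort.1.1 hshort.2
        exact ⟨hS1 x hxB y hyB hpos hxy, hS2, hshort.2, hshort.1.1⟩
      rcases hS.2.2.2.1 x₀ ⟨hadj', u', hu'B, hsc', hcore⟩ with hsol | hsol | hsol
      · -- type (m,1): contradiction, a or b is in L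
        obtain ⟨u, a, b, hpair, hone⟩ := hsol
        obtain ⟨hxab, -, -, -⟩ := hmain u a b hpair
        rcases hone with h | h
        · have haL : a ∈ L := by
            have : a ∈ (L ∩ GLegVerts T v) ∩ Branch T v x₀ := by rw [h]; rfl
            exact this.1.1
          rcases hxab with ⟨hxa, _⟩ | ⟨_, hya⟩
          · exact absurd (by rw [hxa]; exact haL) hxL
          · exact absurd (by rw [hya]; exact haL) hyL
        · have hbL : b ∈ L := by
            have : b ∈ (L ∩ GLegVerts T v) ∩ Branch T v x₀ := by rw [h]; rfl
            exact this.1.1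
          rcases hxab with ⟨_, hyb⟩ | ⟨hxb, _⟩
          · exact absurd (by rw [hyb]; exact hbL) hyL
          · exact absurd (by rw [hxb]; exact hbL) hxL
      · -- type (m,2): the two far vertices separate
        obtain ⟨u, a, b, hpair, hna, hnb, ⟨w₁, hw₁, w₂, hw₂, hww, hd₁, hd₂⟩, hall⟩ := hsol
        obtain ⟨hxab, hS2, hshorteq, hadjub⟩ := hmain u a b hpair
        obtain ⟨huB, hsc, habne, haB, hbB, hda, hdb, hshort⟩ := hpair
        have hsepab : ∀ w, w ∈ (L ∩ GLegVerts T v) ∩ Branch T v x₀ →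
            T.dist v u + 2 ≤ T.dist v w → Separates T w x y := by
          intro w hw hfar
          have hwa : w ∈ Branch T u a := hS2 w hw.2 hfar
          have hwb : w ∉ Branch T u b := by
            rw [hshorteq]
            intro h
            have hwb' : w = b := h
            rw [hwb'] at hfar
            omega
          have hbub : b ∈ Branch T u b := by rw [hshorteq]; rfl
          have hcd : T.dist w b = T.dist w u + T.dist u b :=
            cross_dist hT hadjub hbub hwb
          have hub1 : T.dist u b = 1 := dist_eq_one_iff_adj.mpr hadjub
          have hwa' : T.dist u w = T.dist a w + 1 := hwa
          have c1 : T.dist u w = T.dist w u := dist_comm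
          have c2 : T.dist a w = T.dist w a := dist_comm
          rcases hxab with ⟨hxa, hyb⟩ | ⟨hxb, hya⟩
          · rw [hxa, hyb]; show T.dist w a ≠ T.dist w b; omega
          · rw [hxb, hya]; show T.dist w b ≠ T.dist w a; omega
        exact ⟨w₁, hw₁.1.1, w₂, hw₂.1.1, hww, hsepab w₁ hw₁ hd₁, hsepab w₂ hw₂ hd₂⟩
      · -- type (m,3): contradiction, a or b is in L
        obtain ⟨u, a, b, hpair, htwo, habS⟩ := hsol
        obtain ⟨hxab, -, -, -⟩ := hmain u a b hpair
        rcases habS with h | h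
        · rcases hxab with ⟨hxa, _⟩ | ⟨_, hya⟩
          · exact absurd (by rw [hxa]; exact h.1) hxL
          · exact absurd (by rw [hya]; exact h.1) hyL
        · rcases hxab with ⟨_, hyb⟩ | ⟨hxb, _⟩
          · exact absurd (by rw [hyb]; exact h.1) hyL
          · exact absurd (by rw [hxb]; exact h.1) hxL
  · -- different g-legs
    have hempty : ∀ p₀ q₀ p' q' : V, IsGLeg T v p₀ → IsGLeg T v q₀ → p₀ ≠ q₀ →
        p' ∈ Branch T v p₀ → q' ∈ Branch T v q₀ → p' ∉ L → q' ∉ L →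
        T.dist v p' = T.dist v q' → L ∩ Branch T v p₀ = ∅ →
        HasTwoSeparators T L p' q' := by
      intro p₀ q₀ p' q' hp₀ hq₀ hne hpB hqB hpL hqL hdq hLem
      have hadjp : T.Adj v p₀ := by rcases hp₀ with h | h <;> exact h.1
      have hadjq : T.Adj v q₀ := by rcases hq₀ with h | h <;> exact h.1
      have hs0p : SolS0 T v p₀ (L ∩ GLegVerts T v) := by
        show _ ∩ _ = ∅
        rw [hSB p₀ hp₀]
        exact hLem
      have hstdp : IsStandardLeg T v p₀ := by
        rcases hp₀ with h | h
        · exact h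
        · exact absurd hLem (Set.nonempty_iff_ne_empty.mp (hMne p₀ h))
      have hdone2 : (∃ w₁ ∈ (L ∩ GLegVerts T v) ∩ Branch T v q₀,
          ∃ w₂ ∈ (L ∩ GLegVerts T v) ∩ Branch T v q₀, w₁ ≠ w₂) →
          HasTwoSeparators T L p' q' := by
        rintro ⟨w₁, hw₁, w₂, hw₂, hww⟩
        refine ⟨w₁, hw₁.1.1, w₂, hw₂.1.1, hww, ?_, ?_⟩
        · exact sep_symm (sep_lemma hT hne.symm hadjq hadjp hqB hpB hdq.symm hw₁.2)
        · exact sep_symm (sep_lemma hT hne.symm hadjq hadjp hqB hpB hdq.symm hw₂.2)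
      rcases hq₀ with hstdq | hmodq
      · -- q₀ standard
        have hqcase : ((L ∩ GLegVerts T v) ∩ Branch T v q₀).Nonempty →
            HasTwoSeparators T L p' q' := by
          rintro ⟨w, hwS⟩
          by_cases hqshort : Branch T v q₀ = {q₀}
          · exfalso
            have hq' : q' = q₀ := by have := hqB; rw [hqshort] at this; exact this
            have hw' : w = q₀ := by have := hwS.2; rw [hqshort] at this; exact this
            exact hqL (by rw [hq', ← hw']; exact hwS.1.1)
          · by_cases hpshort : Branch T v p₀ = {p₀}
            · rcases hS.2.2.2.2.2.2 ⟨p₀, ⟨hstdp, hpshort⟩, hs0p⟩ q₀ ⟨hstdq, hqshort⟩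
                with h2 | h3
              · exact hdone2 h2
              · exfalso
                have hp'1 : T.dist v p' = 1 := by
                  have hpp : p' = p₀ := by have := hpB; rw [hpshort] at this; exact this
                  rw [hpp]
                  exact dist_eq_one_iff_adj.mpr hadjp
                have hq'1 : q' = q₀ := branch_base hT hqB (by omega)
                have hq₀m : q₀ ∈ (L ∩ GLegVerts T v) ∩ Branch T v q₀ := by rw [h3]; rfl
                exact hqL (by rw [hq'1]; exact hq₀m.1.1)
            · exact hdone2
                (hS.2.2.2.2.2.1 p₀ ⟨hstdp, hpshort⟩ hs0p q₀ ⟨hstdq, hqshort⟩ hne.symm)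
        rcases hS.2.2.1 q₀ hstdq with h0 | h1 | h2 | h3
        · exact (hS.2.1 p₀ q₀ hstdp hstdq hne hs0p h0).elim
        · obtain ⟨w, hw, -⟩ := h1
          exact hqcase ⟨w, by rw [hw]; rfl⟩
        · exact hdone2 h2
        · exact hqcase ⟨q₀, by rw [h3]; rfl⟩
      · -- q₀ modified
        have hnm1 := hS.2.2.2.2.1 ⟨p₀, hstdp, hs0p⟩ q₀ hmodq
        rcases hS.2.2.2.1 q₀ hmodq with h | h | h
        · exact (hnm1 h).elim
        · obtain ⟨u, a, b, -, -, -, ⟨w₁, hw₁, w₂, hw₂, hww, -, -⟩, -⟩ := h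
          exact hdone2 ⟨w₁, hw₁, w₂, hw₂, hww⟩
        · obtain ⟨u, a, b, -, htwo, -⟩ := h
          exact hdone2 htwo
    by_cases hEx : L ∩ Branch T v x₀ = ∅
    · exact hempty x₀ y₀ x y hxleg hyleg hsame hxB hyB hxL hyL hpos hEx
    · by_cases hEy : L ∩ Branch T v y₀ = ∅
      · obtain ⟨τ₁, h1, τ₂, h2, hne12, hs1, hs2⟩ :=
          hempty y₀ x₀ y x hyleg hxleg (Ne.symm hsame) hyB hxB hyL hxL hpos.symm hEy
        exact ⟨τ₁, h1, τ₂, h2, hne12, sep_symm hs1, sep_symm hs2⟩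
      · obtain ⟨τ₁, hτ₁⟩ := Set.nonempty_iff_ne_empty.mpr hEx
        obtain ⟨τ₂, hτ₂⟩ := Set.nonempty_iff_ne_empty.mpr hEy
        refine ⟨τ₁, hτ₁.1, τ₂, hτ₂.1, ?_, ?_, ?_⟩
        · intro h
          exact branch_disjoint hT hsame hadjx hadjy hτ₁.2 (h ▸ hτ₂.2)
        · exact sep_lemma hT hsame hadjx hadjy hxB hyB hpos hτ₁.2
        · exact sep_symm (sep_lemma hT (Ne.symm hsame) hadjy hadjx hyB hxB hpos.symm hτ₂.2)
end
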